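/- arXiv:2204.11245 — 4 statements merged into one kernel-verified Lean document; each statement's English description precedes it below -/
import Mathlib

section
/- For real a > −1 and b > 0, ∫_0^∞ x^a/(1+x) · exp(−b x) dx = exp(b) · Γ(a+1) · Γ(−a, b), where Γ(−a,b) = ∫_b^∞ t^{−a−1} e^{−t} dt is the upper incomplete Gamma function with (possibly negative) first argument. -/
/-!
Since `∫_b^∞ e^{-(1+x)t} dt = e^{-b} e^{-bx} / (1+x)`, the left-hand side times `e^{-b}` is the
double integral of the nonnegative kernel `x^a e^{-(1+x)t}` over `x > 0, t > b`. Integrating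
in `x` first instead gives `e^{-t} ∫_0^∞ x^a e^{-tx} dx = Γ(a+1) t^{-a-1} e^{-t}`.
-/

open MeasureTheory Set Real

lemma integral_rpow_mul_exp_neg_mul_Ioi_of_neg_one_lt {a t : ℝ} (ha : -1 < a) (ht : 0 < t) :
    ∫ x in Ioi (0:ℝ), x ^ a * exp (-(t * x)) = Gamma (a + 1) * t ^ (-a - 1) := by
  have h := integral_rpow_mul_exp_neg_mul_Ioi (a := a + 1) (by linarith) ht
  rw [add_sub_cancel_right] at h
  rw [h, one_div, inv_rpow ht.le, ← rpow_neg ht.le, neg_add', mul_comm]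

lemma integral_exp_neg_mul_Ioi {c : ℝ} (hc : 0 < c) (b : ℝ) :
    ∫ t in Ioi b, exp (-(c * t)) = exp (-(c * b)) / c := by
  simpa only [neg_mul, neg_div_neg_eq] using integral_exp_mul_Ioi (neg_lt_zero.2 hc) b

lemma integrableOn_rpow_div_one_add_mul_exp_neg_mul {a b : ℝ} (ha : -1 < a) (hb : 0 < b) :
    IntegrableOn (fun x => x ^ a / (1 + x) * exp (-(b * x))) (Ioi 0) := by
  have hgamma : IntegrableOn (fun x => x ^ a * exp (-(b * x))) (Ioi 0) := by
    simpa only [rpow_one, neg_mul] using integrableOn_rpow_mul_exp_neg_mul_rpow ha one_pos hb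
  refine hgamma.mono' ?_ ?_
  · refine ContinuousOn.aestronglyMeasurable ?_ measurableSet_Ioi
    refine ((continuousOn_id.rpow_const fun x hx => Or.inl (ne_of_gt hx)).div
      (continuousOn_const.add continuousOn_id) fun x (hx : 0 < x) => ?_).mul (by fun_prop)
    exact (by linarith : (0:ℝ) < 1 + x).ne'
  · filter_upwards [self_mem_ae_restrict measurableSet_Ioi] with x (hx : 0 < x)
    rw [norm_of_nonneg (by positivity), div_mul_eq_mul_div]
    exact div_le_self (by positivity) (by linarith)

lemma integral_rpow_mul_exp_neg_one_add_mul_Ioi {a x : ℝ} (hx : -1 < x) (b : ℝ) :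
    ∫ t in Ioi b, x ^ a * exp (-((1 + x) * t)) =
      exp (-b) * (x ^ a / (1 + x) * exp (-(b * x))) := by
  rw [integral_const_mul, integral_exp_neg_mul_Ioi (by linarith),
    show -((1 + x) * b) = -b + -(b * x) by ring, exp_add]
  ring

lemma integral_rpow_mul_exp_neg_one_add_mul_Ioi_zero {a t : ℝ} (ha : -1 < a) (ht : 0 < t) :
    ∫ x in Ioi (0:ℝ), x ^ a * exp (-((1 + x) * t)) =
      Gamma (a + 1) * (t ^ (-a - 1) * exp (-t)) := by
  have h : ∀ x : ℝ, x ^ a * exp (-((1 + x) * t)) = exp (-t) * (x ^ a * exp (-(t * x))) := by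
    intro x
    rw [mul_left_comm, ← exp_add]
    congr 2
    ring
  simp_rw [h]
  rw [integral_const_mul, integral_rpow_mul_exp_neg_mul_Ioi_of_neg_one_lt ha ht]
  ring

lemma integrable_rpow_mul_exp_neg_one_add_mul_prod {a b : ℝ} (ha : -1 < a) (hb : 0 < b) :
    Integrable (Function.uncurry fun x t : ℝ => x ^ a * exp (-((1 + x) * t)))
      ((volume.restrict (Ioi 0)).prod (volume.restrict (Ioi b))) := by
  have hmeas : AEStronglyMeasurable (Function.uncurry fun x t : ℝ => x ^ a * exp (-((1 + x) * t)))
      ((volume.restrict (Ioi 0)).prod (volume.restrict (Ioi b))) := by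
    rw [Measure.prod_restrict]
    refine ContinuousOn.aestronglyMeasurable ?_ (measurableSet_Ioi.prod measurableSet_Ioi)
    exact (continuous_fst.continuousOn.rpow_const fun p hp => Or.inl (ne_of_gt hp.1)).mul
      (by fun_prop)
  refine (integrable_prod_iff hmeas).2 ⟨?_, ?_⟩
  · filter_upwards [self_mem_ae_restrict measurableSet_Ioi] with x (hx : 0 < x)
    simpa only [Function.uncurry_apply_pair, neg_mul] using
      (exp_neg_integrableOn_Ioi b (by linarith : (0:ℝ) < 1 + x)).const_mul (x ^ a)
  · refine ((integrableOn_rpow_div_one_add_mul_exp_neg_mul ha hb).const_mul (exp (-b))).congr ?_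
    filter_upwards [self_mem_ae_restrict measurableSet_Ioi] with x (hx : 0 < x)
    have hnorm : ∀ t : ℝ, ‖x ^ a * exp (-((1 + x) * t))‖ = x ^ a * exp (-((1 + x) * t)) :=
      fun t => norm_of_nonneg (by positivity)
    simp only [Function.uncurry_apply_pair, hnorm]
    exact (integral_rpow_mul_exp_neg_one_add_mul_Ioi (by linarith) b).symm

/-- ∫₀^∞ x^a/(1+x) e^{-bx} dx = e^b Γ(a+1) Γ(-a,b). -/
theorem stmt_4 (a b : ℝ) (ha : -1 < a) (hb : 0 < b) :
    ∫ x in Ioi (0:ℝ), x ^ a / (1 + x) * Real.exp (-(b * x)) =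
      Real.exp b * Real.Gamma (a + 1) *
        ∫ t in Ioi b, t ^ (-a - 1) * Real.exp (-t) := by
  have hfubini := integral_integral_swap (integrable_rpow_mul_exp_neg_one_add_mul_prod ha hb)
  rw [setIntegral_congr_fun measurableSet_Ioi fun x (hx : 0 < x) =>
      integral_rpow_mul_exp_neg_one_add_mul_Ioi (a := a) (by linarith) b,
    setIntegral_congr_fun measurableSet_Ioi fun t (ht : b < t) =>
      integral_rpow_mul_exp_neg_one_add_mul_Ioi_zero ha (hb.trans ht),
    integral_const_mul, integral_const_mul] at hfubini
  calc _ = exp b * (exp (-b) * ∫ x in Ioi (0:ℝ), x ^ a / (1 + x) * exp (-(b * x))) := by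
        rw [← mul_assoc, ← exp_add, add_neg_cancel, exp_zero, one_mul]
    _ = _ := by rw [hfubini, mul_assoc]
end

section
/- Let h have density f(x) = m^m/Γ(m)·x^{m−1}e^{−mx} with m a positive integer, and let Ω > 0. For the SINR γ = (1/Ω)·m·h (so that P(γ < t) = γ(m, Ωt)/Γ(m)), the ergodic quantity (1/2)·E[log₂(1+γ)] equals (1/(2 ln 2)) · Σ_{k=0}^{m−1} exp(Ω) · E_{1+k}(Ω), where E_n is the generalized exponential integral. -/
open MeasureTheory ProbabilityTheory Set
section Aux
open Finset Nat

lemma expSum_hasDerivAt (n : ℕ) (x : ℝ) :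
    HasDerivAt (fun y : ℝ => Real.exp (-y) * ∑ k ∈ Finset.range (n+1), y^k / k !)
      (- (Real.exp (-x) * x ^ n / n !)) x := by
  have hsum : HasDerivAt (fun y : ℝ => ∑ k ∈ Finset.range (n+1), y^k / k !)
      (∑ k ∈ Finset.range n, x^k / k !) x := by
    have h : HasDerivAt (fun y : ℝ => ∑ k ∈ Finset.range (n+1), y^k / k !)
        (∑ k ∈ Finset.range (n+1), (k : ℝ) * x^(k-1) / k !) x := by
      apply HasDerivAt.fun_sum
      intro k _
      exact (hasDerivAt_pow k x).div_const _
    convert h using 1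
    rw [Finset.sum_range_succ']
    simp only [Nat.cast_zero, pow_zero, Nat.factorial_zero, Nat.cast_one, Nat.cast_succ,
      Nat.add_sub_cancel]
    rw [show ((0:ℝ) * x ^ (0-1) / (0+1) = 0) by simp, add_zero]
    apply Finset.sum_congr rfl
    intro k _
    have h1 : ((k:ℝ)+1) ≠ 0 := by positivity
    have h2 : ((k ! : ℕ) : ℝ) ≠ 0 := by positivity
    rw [Nat.factorial_succ]
    push_cast
    field_simp
  have hexp : HasDerivAt (fun y : ℝ => Real.exp (-y)) (-Real.exp (-x)) x := by
    have h := (Real.hasDerivAt_exp (-x)).comp x (hasDerivAt_neg x)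
    simp at h; exact h
  have := hexp.mul hsum
  refine this.congr_deriv ?_
  have hfac : (n ! : ℝ) ≠ 0 := by positivity
  rw [Finset.sum_range_succ]
  field_simp
  ring

lemma lower_gamma_eq (n : ℕ) (x : ℝ) :
    ∫ s in (0:ℝ)..x, s ^ n * Real.exp (-s)
      = (n ! : ℝ) * (1 - Real.exp (-x) * ∑ k ∈ Finset.range (n+1), x^k / k !) := by
  have key : ∀ y : ℝ, HasDerivAt
      (fun y : ℝ => (n ! : ℝ) * (1 - Real.exp (-y) * ∑ k ∈ Finset.range (n+1), y^k / k !))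
      (y ^ n * Real.exp (-y)) y := by
    intro y
    have := ((expSum_hasDerivAt n y).const_mul ((n !:ℝ))).neg.const_add ((n !:ℝ))
    have h2 : (fun y : ℝ => (n ! :ℝ) + -((n !:ℝ) * (Real.exp (-y) * ∑ k ∈ Finset.range (n+1), y^k / k !)))
        = fun y : ℝ => (n ! : ℝ) * (1 - Real.exp (-y) * ∑ k ∈ Finset.range (n+1), y^k / k !) := by
      funext y; ring
    rw [← h2]
    refine this.congr_deriv ?_
    have hfac : (n ! : ℝ) ≠ 0 := by positivity
    field_simp
  have hcont : Continuous fun s : ℝ => s ^ n * Real.exp (-s) := by continuity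
  rw [intervalIntegral.integral_eq_sub_of_hasDerivAt (fun y _ => key y)
    (hcont.intervalIntegrable 0 x)]
  have h0 : ∑ k ∈ Finset.range (n+1), (0:ℝ)^k / k ! = 1 := by
    rw [Finset.sum_eq_single 0]
    · simp
    · intro k _ hk
      rw [zero_pow hk]; simp
    · simp
  simp [h0]

lemma intPow {Om : ℝ} (hOm : 0 < Om) (k : ℕ) :
    IntegrableOn (fun t : ℝ => t^k * Real.exp (-(Om*t))) (Ioi 0) := by
  have := integrableOn_rpow_mul_exp_neg_mul_rpow (p := 1) (s := (k:ℝ)) (b := Om)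
    (by exact lt_of_lt_of_le neg_one_lt_zero (Nat.cast_nonneg k)) zero_lt_one hOm
  apply this.congr_fun ?_ measurableSet_Ioi
  intro x hx
  simp [Real.rpow_one, Real.rpow_natCast, neg_mul]

lemma intPowDiv {Om : ℝ} (hOm : 0 < Om) (k : ℕ) :
    IntegrableOn (fun t : ℝ => t^k * Real.exp (-(Om*t)) / (1+t)) (Ioi 0) := by
  apply Integrable.mono (intPow hOm k)
  · apply ContinuousOn.aestronglyMeasurable ?_ measurableSet_Ioi
    apply ContinuousOn.div (Continuous.continuousOn (by continuity))
      (Continuous.continuousOn (by continuity))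
    intro x hx
    have : (0:ℝ) < x := hx
    positivity
  · filter_upwards [ae_restrict_mem measurableSet_Ioi] with t ht
    have ht' : (0:ℝ) < t := ht
    have h1 : (1:ℝ) ≤ 1 + t := by linarith
    rw [Real.norm_eq_abs, Real.norm_eq_abs, abs_of_nonneg (by positivity),
      abs_of_nonneg (by positivity)]
    exact div_le_self (by positivity) h1

lemma intE {Om : ℝ} (hOm : 0 < Om) (k : ℕ) :
    IntegrableOn (fun u : ℝ => Real.exp (-(Om*u)) / u^k) (Ioi 1) := by
  apply Integrable.mono (exp_neg_integrableOn_Ioi 1 hOm)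
  · apply ContinuousOn.aestronglyMeasurable ?_ measurableSet_Ioi
    apply ContinuousOn.div (Continuous.continuousOn (by continuity))
      (Continuous.continuousOn (by continuity))
    intro x hx
    have : (1:ℝ) < x := hx
    positivity
  · filter_upwards [ae_restrict_mem measurableSet_Ioi] with u hu
    have hu' : (1:ℝ) < u := hu
    have h1 : (1:ℝ) ≤ u^k := one_le_pow₀ hu'.le
    rw [Real.norm_eq_abs, Real.norm_eq_abs, abs_of_nonneg (by positivity),
      abs_of_nonneg (by positivity), neg_mul]
    exact div_le_self (by positivity) h1

lemma E_rec {Om : ℝ} (hOm : 0 < Om) (k : ℕ) :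
    ((k:ℝ)+1) * (∫ u in Ioi (1:ℝ), Real.exp (-(Om*u)) / u^(k+2))
      + Om * (∫ u in Ioi (1:ℝ), Real.exp (-(Om*u)) / u^(k+1)) = Real.exp (-Om) := by
  set f' : ℝ → ℝ := fun u => ((k:ℝ)+1) * (Real.exp (-(Om*u)) / u^(k+2))
      + Om * (Real.exp (-(Om*u)) / u^(k+1)) with hf'
  have hderiv : ∀ u ∈ Ici (1:ℝ), HasDerivAt
      (fun u : ℝ => -(Real.exp (-(Om*u)) * (u^(k+1))⁻¹)) (f' u) u := by
    intro u hu
    have hu0 : (u:ℝ) ≠ 0 := by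
      have : (1:ℝ) ≤ u := hu
      positivity
    have h1 : HasDerivAt (fun u : ℝ => -(Om*u)) (-Om) u := by
      have h := ((hasDerivAt_id u).const_mul Om).neg
      simp at h; exact h
    have hexp : HasDerivAt (fun u : ℝ => Real.exp (-(Om*u)))
        (Real.exp (-(Om*u)) * (-Om)) u := (Real.hasDerivAt_exp _).comp u h1
    have hinv : HasDerivAt (fun u : ℝ => (u^(k+1))⁻¹)
        (-(((k:ℝ)+1) * u^k) / (u^(k+1))^2) u := by
      have := (hasDerivAt_pow (k+1) u).inv (pow_ne_zero _ hu0)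
      simp at this; exact this
    have := (hexp.mul hinv).neg
    refine this.congr_deriv ?_
    rw [hf']
    have hupos : (0:ℝ) < u := lt_of_lt_of_le one_pos hu
    field_simp
    ring
  have hint2 : IntegrableOn f' (Ioi (1:ℝ)) :=
    (((intE hOm (k+2)).const_mul _).add ((intE hOm (k+1)).const_mul _))
  have htend : Filter.Tendsto (fun u : ℝ => -(Real.exp (-(Om*u)) * (u^(k+1))⁻¹))
      Filter.atTop (nhds 0) := by
    have h1 : Filter.Tendsto (fun u : ℝ => Real.exp (-(Om*u))) Filter.atTop (nhds 0) := by
      have hm : Filter.Tendsto (fun u : ℝ => Om * u) Filter.atTop Filter.atTop :=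
        Filter.Tendsto.const_mul_atTop hOm Filter.tendsto_id
      exact Real.tendsto_exp_neg_atTop_nhds_zero.comp hm
    have h2 : Filter.Tendsto (fun u : ℝ => (u^(k+1))⁻¹) Filter.atTop (nhds 0) :=
      tendsto_inv_atTop_zero.comp (Filter.tendsto_pow_atTop (Nat.succ_ne_zero k))
    simpa using (h1.mul h2).neg
  have key := MeasureTheory.integral_Ioi_of_hasDerivAt_of_tendsto' hderiv hint2 htend
  have hsplit : ∫ u in Ioi (1:ℝ), f' u
      = ((k:ℝ)+1) * (∫ u in Ioi (1:ℝ), Real.exp (-(Om*u)) / u^(k+2))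
        + Om * (∫ u in Ioi (1:ℝ), Real.exp (-(Om*u)) / u^(k+1)) := by
    rw [hf', MeasureTheory.integral_add ((intE hOm (k+2)).const_mul _)
      ((intE hOm (k+1)).const_mul _), MeasureTheory.integral_const_mul,
      MeasureTheory.integral_const_mul]
  rw [← hsplit, key]
  simp

lemma base_change {Om : ℝ} (hOm : 0 < Om) :
    ∫ u in Ioi (1:ℝ), Real.exp (-(Om*u)) / u
      = Real.exp (-Om) * ∫ t in Ioi (0:ℝ), Real.exp (-(Om*t)) / (1+t) := by
  have h := (measurePreserving_add_right (volume : Measure ℝ) 1).setIntegral_preimage_emb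
    (measurableEmbedding_addRight 1) (fun u => Real.exp (-(Om*u)) / u) (Ioi 1)
  have hpre : (fun x : ℝ => x + 1) ⁻¹' (Ioi 1) = Ioi (0:ℝ) := by
    ext x; simp
  rw [hpre] at h
  rw [← h, ← MeasureTheory.integral_const_mul]
  apply MeasureTheory.setIntegral_congr_fun measurableSet_Ioi
  intro t ht
  simp only
  rw [mul_add, mul_one, neg_add, Real.exp_add, add_comm t 1]
  ring

lemma per_k {Om : ℝ} (hOm : 0 < Om) : ∀ k : ℕ,
    Om^k * ∫ t in Ioi (0:ℝ), t^k * Real.exp (-(Om*t)) / (1+t)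
      = (k ! : ℝ) * (Real.exp Om * ∫ u in Ioi (1:ℝ), Real.exp (-(Om*u)) / u^(k+1)) := by
  intro k
  induction k with
  | zero =>
    simp only [pow_zero, Nat.factorial_zero, Nat.cast_one, one_mul, zero_add, pow_one]
    rw [base_change hOm, ← mul_assoc, ← Real.exp_add]
    simp
  | succ k ih =>
    have hpowval : Om^(k+1) * ∫ t in Ioi (0:ℝ), t^k * Real.exp (-(Om*t)) = (k ! : ℝ) := by
      have h1 := Real.integral_rpow_mul_exp_neg_mul_Ioi (a := (k:ℝ)+1) (r := Om)
        (by positivity) hOm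
      have h2 : ∫ t in Ioi (0:ℝ), t^k * Real.exp (-(Om*t))
          = ∫ t in Ioi (0:ℝ), t^((k:ℝ)+1-1) * Real.exp (-(Om*t)) := by
        congr 1
        funext t
        rw [show ((k:ℝ)+1-1) = ((k:ℕ):ℝ) by push_cast; ring, Real.rpow_natCast]
      rw [h2, h1, Real.Gamma_nat_eq_factorial,
        show ((k:ℝ)+1) = ((k+1:ℕ):ℝ) by push_cast; ring, Real.rpow_natCast]
      rw [div_pow, one_pow]
      field_simp
    have hadd : (∫ t in Ioi (0:ℝ), (t^(k+1) * Real.exp (-(Om*t)) / (1+t)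
          + t^k * Real.exp (-(Om*t)) / (1+t)))
        = ∫ t in Ioi (0:ℝ), t^k * Real.exp (-(Om*t)) := by
      apply MeasureTheory.setIntegral_congr_fun measurableSet_Ioi
      intro t ht
      have h0 : (0:ℝ) < t := ht
      have h1 : (1:ℝ)+t ≠ 0 := by positivity
      field_simp
      ring
    rw [MeasureTheory.integral_add (intPowDiv hOm (k+1)) (intPowDiv hOm k)] at hadd
    have hA : Om^(k+1) * ((∫ t in Ioi (0:ℝ), t^(k+1) * Real.exp (-(Om*t)) / (1+t))
        + ∫ t in Ioi (0:ℝ), t^k * Real.exp (-(Om*t)) / (1+t)) = (k ! : ℝ) := by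
      rw [hadd]; exact hpowval
    have hE := E_rec hOm k
    have hexp : Real.exp Om * Real.exp (-Om) = 1 := by
      rw [← Real.exp_add]; simp
    have hfact : (((k+1)! : ℕ) : ℝ) = ((k:ℝ)+1) * (k ! : ℝ) := by
      rw [Nat.factorial_succ]; push_cast; ring
    set A1 := ∫ t in Ioi (0:ℝ), t^(k+1) * Real.exp (-(Om*t)) / (1+t) with hA1
    set A0 := ∫ t in Ioi (0:ℝ), t^k * Real.exp (-(Om*t)) / (1+t) with hA0
    set E2 := ∫ u in Ioi (1:ℝ), Real.exp (-(Om*u)) / u^(k+2) with hE2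
    set E1 := ∫ u in Ioi (1:ℝ), Real.exp (-(Om*u)) / u^(k+1) with hE1
    have hgoal : Om^(k+1) * A1 = (((k+1)! : ℕ) : ℝ) * (Real.exp Om * E2) := by
      linear_combination hA - Om * ih - (k ! : ℝ) * Real.exp Om * hE
        - (k ! : ℝ) * hexp - (Real.exp Om * E2) * hfact
    convert hgoal using 3

lemma log_one_add_eq {y : ℝ} (hy : 0 ≤ y) :
    ∫ s in (0:ℝ)..y, (1+s)⁻¹ = Real.log (1+y) := by
  have hderiv : ∀ s ∈ uIcc (0:ℝ) y, HasDerivAt (fun s : ℝ => Real.log (1+s)) ((1+s)⁻¹) s := by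
    intro s hs
    rw [uIcc_of_le hy] at hs
    have h0 : (0:ℝ) < 1 + s := by have := hs.1; linarith
    have := (Real.hasDerivAt_log (ne_of_gt h0)).comp s ((hasDerivAt_id s).const_add 1)
    simp at this; exact this
  have hcont : ContinuousOn (fun s : ℝ => (1+s)⁻¹) (uIcc (0:ℝ) y) := by
    apply ContinuousOn.inv₀ (Continuous.continuousOn (by continuity))
    intro s hs
    rw [uIcc_of_le hy] at hs
    have := hs.1; positivity
  rw [intervalIntegral.integral_eq_sub_of_hasDerivAt hderiv
    (hcont.intervalIntegrable)]
  simp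

end Aux

/-- OMA ergodic rate: if γ has CDF t ↦ γ(m,Ωt)/Γ(m), then
(1/2)E[log₂(1+γ)] = (1/(2 ln 2)) Σ_{k=0}^{m-1} e^Ω E_{1+k}(Ω). -/
theorem stmt_8 {Ω' : Type*} [MeasureSpace Ω'] [IsProbabilityMeasure (ℙ : Measure Ω')]
    (m : ℕ) (hm : 0 < m) (Om : ℝ) (hOm : 0 < Om)
    (g : Ω' → ℝ) (hmeas : Measurable g) (hpos : ∀ ω, 0 ≤ g ω)
    (hcdf : ∀ t : ℝ, 0 ≤ t → (ℙ {ω | g ω ≤ t}).toReal =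
      (∫ x in (0:ℝ)..(Om * t), x ^ (m - 1) * Real.exp (-x)) / Real.Gamma m)
    (hint : Integrable fun ω => Real.logb 2 (1 + g ω)) :
    (1 / 2) * ∫ ω, Real.logb 2 (1 + g ω) =
      (1 / (2 * Real.log 2)) * ∑ k ∈ Finset.range m,
        Real.exp Om * ∫ u in Ioi (1:ℝ), Real.exp (-(Om * u)) / u ^ (1 + k) := by
  obtain ⟨n, rfl⟩ : ∃ n, m = n + 1 := ⟨m-1, (Nat.succ_pred_eq_of_pos hm).symm⟩
  set S : ℝ → ℝ := fun t => Real.exp (-(Om*t)) * ∑ k ∈ Finset.range (n+1), (Om*t)^k / (Nat.factorial k)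
    with hS
  -- CDF in closed form
  have hF : ∀ t : ℝ, 0 ≤ t → (ℙ {ω | g ω ≤ t}).toReal = 1 - S t := by
    intro t ht
    rw [hcdf t ht]
    rw [show ((n+1:ℕ):ℝ) = (n:ℝ)+1 by push_cast; ring, Real.Gamma_nat_eq_factorial,
      Nat.add_sub_cancel, lower_gamma_eq]
    have hfac : (((Nat.factorial n) : ℕ):ℝ) ≠ 0 := by positivity
    simp only [hS]
    field_simp
  -- survival function
  have hSnn : ∀ t : ℝ, 0 ≤ t → 0 ≤ S t := by
    intro t ht
    simp only [hS]
    apply mul_nonneg (Real.exp_nonneg _)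
    apply Finset.sum_nonneg
    intro k _
    positivity
  have hmsle : ∀ t : ℝ, MeasurableSet {ω | g ω ≤ t} := fun t =>
    hmeas measurableSet_Iic
  have hsurv : ∀ t : ℝ, 0 < t → ℙ {ω | t < g ω} = ENNReal.ofReal (S t) := by
    intro t ht
    have hc : {ω | t < g ω} = {ω | g ω ≤ t}ᶜ := by
      ext ω; simp [not_le]
    have hle1 : 0 ≤ 1 - S t := by
      have h := hF t ht.le
      have := ENNReal.toReal_nonneg (a := ℙ {ω | g ω ≤ t})
      linarith [h ▸ this]
    have hmeq : ℙ {ω | g ω ≤ t} = ENNReal.ofReal (1 - S t) := by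
      rw [← hF t ht.le, ENNReal.ofReal_toReal (measure_ne_top _ _)]
    rw [hc, measure_compl (hmsle t) (measure_ne_top _ _), measure_univ, hmeq,
      ← ENNReal.ofReal_one, ← ENNReal.ofReal_sub _ hle1]
    norm_num
  -- integrability of S t * (1+t)⁻¹ and sum decomposition
  have hfun : ∀ t : ℝ, S t * (1+t)⁻¹
      = ∑ k ∈ Finset.range (n+1), Om^k / (Nat.factorial k) * (t^k * Real.exp (-(Om*t)) / (1+t)) := by
    intro t
    simp only [hS, Finset.sum_mul, Finset.mul_sum]
    refine Finset.sum_congr rfl fun k _ => ?_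
    rw [mul_pow]
    ring
  have hSint : IntegrableOn (fun t => S t * (1+t)⁻¹) (Ioi (0:ℝ)) := by
    rw [show (fun t : ℝ => S t * (1+t)⁻¹)
        = fun t => ∑ k ∈ Finset.range (n+1), Om^k / (Nat.factorial k) * (t^k * Real.exp (-(Om*t)) / (1+t))
      from funext hfun]
    exact integrable_finset_sum _ fun k _ => ((intPowDiv hOm k).const_mul _)
  -- integrability of log (1 + g)
  have hlog2pos : (0:ℝ) < Real.log 2 := Real.log_pos (by norm_num)
  have hlogeq : (fun ω => Real.log (1 + g ω))
      = fun ω => Real.logb 2 (1 + g ω) * Real.log 2 := by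
    funext ω
    rw [Real.logb]
    field_simp
  have hlogint : Integrable (fun ω => Real.log (1 + g ω)) := by
    rw [hlogeq]; exact hint.mul_const _
  have hlognn : ∀ ω, 0 ≤ Real.log (1 + g ω) := fun ω =>
    Real.log_nonneg (by linarith [hpos ω])
  -- layer cake
  have hlayer := lintegral_comp_eq_lintegral_meas_lt_mul (ℙ : Measure Ω')
    (f := g) (g := fun t => (1+t)⁻¹) (Filter.Eventually.of_forall hpos)
    hmeas.aemeasurable
    (fun t ht => by
      apply ContinuousOn.intervalIntegrable
      apply ContinuousOn.inv₀ (Continuous.continuousOn (by continuity))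
      intro s hs
      rw [uIcc_of_le ht.le] at hs
      have := hs.1
      positivity)
    (by
      filter_upwards [ae_restrict_mem measurableSet_Ioi] with t ht
      have : (0:ℝ) < t := ht
      positivity)
  have hL1 : ∫⁻ ω, ENNReal.ofReal (∫ s in (0:ℝ)..g ω, (1+s)⁻¹) ∂ℙ
      = ENNReal.ofReal (∫ ω, Real.log (1 + g ω)) := by
    have h1 : ∫⁻ ω, ENNReal.ofReal (∫ s in (0:ℝ)..g ω, (1+s)⁻¹) ∂ℙ
        = ∫⁻ ω, ENNReal.ofReal (Real.log (1 + g ω)) ∂ℙ :=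
      lintegral_congr fun ω => by rw [log_one_add_eq (hpos ω)]
    rw [h1, ← ofReal_integral_eq_lintegral_ofReal hlogint
      (Filter.Eventually.of_forall hlognn)]
  have hR1 : ∫⁻ t in Ioi (0:ℝ), ℙ {a | t < g a} * ENNReal.ofReal ((1+t)⁻¹)
      = ENNReal.ofReal (∫ t in Ioi (0:ℝ), S t * (1+t)⁻¹) := by
    rw [ofReal_integral_eq_lintegral_ofReal hSint ?nn]
    case nn =>
      filter_upwards [ae_restrict_mem measurableSet_Ioi] with t ht
      have ht' : (0:ℝ) < t := ht
      have := hSnn t ht'.le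
      positivity
    apply setLIntegral_congr_fun measurableSet_Ioi
    intro t ht
    have ht' : (0:ℝ) < t := ht
    beta_reduce
    rw [hsurv t ht', ← ENNReal.ofReal_mul (hSnn t ht'.le)]
  have hmain : ∫ ω, Real.log (1 + g ω) = ∫ t in Ioi (0:ℝ), S t * (1+t)⁻¹ := by
    have := hlayer
    rw [hL1, hR1] at this
    rw [← ENNReal.ofReal_eq_ofReal_iff (integral_nonneg hlognn)
      (setIntegral_nonneg measurableSet_Ioi (fun t ht => by
        have ht' : (0:ℝ) < t := ht
        have := hSnn t ht'.le
        positivity))]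
    exact this
  -- compute the integral of S t * (1+t)⁻¹
  have hsumval : ∫ t in Ioi (0:ℝ), S t * (1+t)⁻¹
      = ∑ k ∈ Finset.range (n+1),
          Real.exp Om * ∫ u in Ioi (1:ℝ), Real.exp (-(Om*u)) / u^(1+k) := by
    rw [show (fun t : ℝ => S t * (1+t)⁻¹)
        = fun t => ∑ k ∈ Finset.range (n+1), Om^k / (Nat.factorial k) * (t^k * Real.exp (-(Om*t)) / (1+t))
      from funext hfun]
    rw [integral_finset_sum _ (fun k _ => ((intPowDiv hOm k).const_mul _))]
    refine Finset.sum_congr rfl fun k _ => ?_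
    rw [integral_const_mul]
    have hk : (((Nat.factorial k) : ℕ):ℝ) ≠ 0 := by positivity
    have := per_k hOm k
    rw [show 1 + k = k + 1 from add_comm 1 k]
    field_simp
    linarith [this]
  -- conclude
  have hlogb : ∫ ω, Real.logb 2 (1 + g ω) = (∫ ω, Real.log (1 + g ω)) / Real.log 2 := by
    rw [← integral_div]
    congr 1
  rw [hlogb, hmain, hsumval]
  field_simp
end

section
/- Let X and Y be independent exponential random variables with rate 1 (the case m = 1 of the Nakagami model). Then for any A > 0, E[ln(1 + (1/A)·XY)] = −∫_0^∞ x^{−2} exp(A x − 1/x) · Ei(−A x) dx, where Ei is the exponential integral. In particular, the intermediate step holds: ∫_0^∞ exp(−c z)/(z+1) dz = −exp(c)·Ei(−c) for any c > 0. -/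
open MeasureTheory ProbabilityTheory Set

/-- Exponential integral Ei, for negative arguments: Ei(x) = -∫_{-x}^∞ e^{-t}/t dt. -/
noncomputable def Ei (x : ℝ) : ℝ := -∫ t in Ioi (-x), Real.exp (-t) / t

/-- Exponential(1) density on (0,∞). -/
noncomputable def expDensity (x : ℝ) : ℝ := if 0 < x then Real.exp (-x) else 0

/-!
Conditionally on `X = x`, integration by parts turns `E[log (1 + b Y)]`, `b = x / A`, into
`∫ e^{-y} b / (1 + b y) dy`, and the scaling `z = b y` makes this the integral of the second
identity with `c = A / x`; that identity is the substitution `t = c (z + 1)` in the integral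
defining `Ei (-c)`. Averaging over `X` and substituting `x ↦ 1 / x` gives the first identity.
-/

open Real Filter Topology

theorem integral_comp_add_right_Ioi {E : Type*} [NormedAddCommGroup E] [NormedSpace ℝ E]
    (g : ℝ → E) (a d : ℝ) : ∫ x in Ioi a, g (x + d) = ∫ x in Ioi (a + d), g x := by
  have := (measurePreserving_add_right volume d).setIntegral_preimage_emb
    (measurableEmbedding_addRight d) g (Ioi (a + d))
  rwa [preimage_add_const_Ioi, add_sub_cancel_right] at this

theorem integral_exp_neg_mul_div_add_one {c : ℝ} (hc : 0 < c) :
    ∫ z in Ioi (0:ℝ), exp (-(c * z)) / (z + 1) = -exp c * Ei (-c) := by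
  have hsubst : ∫ t in Ioi c, exp (-t) / t =
      exp (-c) * ∫ z in Ioi (0:ℝ), exp (-(c * z)) / (z + 1) := by
    have hscale := integral_comp_mul_left_Ioi' (fun t => exp (-t) / t) 1 hc
    rw [mul_one, ← zero_add (1:ℝ), ← integral_comp_add_right_Ioi, smul_eq_mul,
      ← integral_const_mul] at hscale
    rw [← hscale, ← integral_const_mul]
    refine setIntegral_congr_fun measurableSet_Ioi fun z (hz : 0 < z) => ?_
    rw [mul_add, mul_one, neg_add, exp_add]
    field_simp
  rw [Ei, neg_neg, hsubst, neg_mul_neg, ← mul_assoc, ← exp_add, add_neg_cancel, exp_zero,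
    one_mul]

theorem integral_comp_inv_Ioi {E : Type*} [NormedAddCommGroup E] [NormedSpace ℝ E]
    (f : ℝ → E) : ∫ x in Ioi (0:ℝ), x ^ (-2:ℝ) • f x⁻¹ = ∫ x in Ioi (0:ℝ), f x := by
  rw [← integral_comp_rpow_Ioi f (p := -1) (by norm_num)]
  refine setIntegral_congr_fun measurableSet_Ioi fun x (hx : 0 < x) => ?_
  norm_num [rpow_neg_one]

theorem integrableOn_mul_exp_neg_Ioi : IntegrableOn (fun y : ℝ => y * exp (-y)) (Ioi 0) := by
  simpa using integrableOn_rpow_mul_exp_neg_rpow (s := 1) (p := 1) (by norm_num) one_pos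

theorem integral_exp_neg_mul_log_one_add_mul_eq_integral_div {b : ℝ} (hb : 0 < b) :
    ∫ y in Ioi (0:ℝ), exp (-y) * log (1 + b * y) =
      ∫ y in Ioi (0:ℝ), exp (-y) * (b / (1 + b * y)) := by
  have hpos : ∀ y ∈ Ici (0:ℝ), 0 < 1 + b * y := fun y (hy : 0 ≤ y) => by positivity
  have hbound : ∀ y ∈ Ici (0:ℝ), ‖log (1 + b * y) * -exp (-y)‖ ≤ b * (y * exp (-y)) := by
    intro y hy
    rw [norm_mul, norm_neg, norm_of_nonneg (log_nonneg (by nlinarith [mem_Ici.mp hy])),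
      norm_of_nonneg (exp_pos _).le, ← mul_assoc]
    exact mul_le_mul_of_nonneg_right (by linarith [log_le_sub_one_of_pos (hpos y hy)])
      (exp_pos _).le
  have hu : ∀ y ∈ Ioi (0:ℝ), HasDerivAt (fun y => log (1 + b * y)) (b / (1 + b * y)) y :=
    fun y hy => by
      simpa using (((hasDerivAt_id y).const_mul b).const_add 1).log
        (hpos y (Ioi_subset_Ici_self hy)).ne'
  have hv : ∀ y ∈ Ioi (0:ℝ), HasDerivAt (fun y => -exp (-y)) (exp (-y)) y := fun y _ => by
    simpa using (hasDerivAt_neg y).exp.fun_neg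
  have huv' : IntegrableOn (fun y => log (1 + b * y) * exp (-y)) (Ioi 0) := by
    refine (integrableOn_mul_exp_neg_Ioi.const_mul b).mono'
      (Measurable.aestronglyMeasurable (by fun_prop)) ?_
    filter_upwards [ae_restrict_mem measurableSet_Ioi] with y hy
    simpa using hbound y (Ioi_subset_Ici_self hy)
  have hu'v : IntegrableOn (fun y => b / (1 + b * y) * -exp (-y)) (Ioi 0) := by
    refine ((integrableOn_exp_neg_Ioi 0).const_mul b).mono'
      (Measurable.aestronglyMeasurable (by fun_prop)) ?_
    filter_upwards [ae_restrict_mem measurableSet_Ioi] with y hy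
    have hy1 := hpos y (Ioi_subset_Ici_self hy)
    rw [norm_mul, norm_neg, norm_of_nonneg (exp_pos _).le, norm_of_nonneg (div_nonneg hb.le hy1.le)]
    exact mul_le_mul_of_nonneg_right (div_le_self hb.le (by nlinarith [mem_Ioi.mp hy]))
      (exp_pos _).le
  have hzero : Tendsto (fun y => log (1 + b * y) * -exp (-y)) (𝓝[>] 0) (𝓝 0) := by
    have : ContinuousAt (fun y => log (1 + b * y) * -exp (-y)) 0 := by
      fun_prop (disch := simp)
    simpa using this.tendsto.mono_left nhdsWithin_le_nhds
  have hinfty : Tendsto (fun y => log (1 + b * y) * -exp (-y)) atTop (𝓝 0) := by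
    refine squeeze_zero_norm' ?_ (by simpa using
      (tendsto_pow_mul_exp_neg_atTop_nhds_zero 1).const_mul b)
    filter_upwards [eventually_ge_atTop 0] with y hy
    exact hbound y hy
  have := integral_Ioi_mul_deriv_eq_deriv_mul hu hv huv' hu'v hzero hinfty
  simp only [mul_neg, integral_neg, sub_zero, zero_sub, neg_neg] at this
  simpa only [mul_comm (exp _)] using this

theorem integral_exp_neg_mul_log_one_add_mul {b : ℝ} (hb : 0 < b) :
    ∫ y in Ioi (0:ℝ), exp (-y) * log (1 + b * y) = -exp b⁻¹ * Ei (-b⁻¹) := by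
  have hscale := integral_comp_mul_left_Ioi (fun z => exp (-(b⁻¹ * z)) / (z + 1)) 0 hb
  rw [mul_zero, smul_eq_mul] at hscale
  calc ∫ y in Ioi (0:ℝ), exp (-y) * log (1 + b * y)
      = ∫ y in Ioi (0:ℝ), b * (exp (-(b⁻¹ * (b * y))) / (b * y + 1)) := by
        rw [integral_exp_neg_mul_log_one_add_mul_eq_integral_div hb]
        refine setIntegral_congr_fun measurableSet_Ioi fun y _ => ?_
        rw [inv_mul_cancel_left₀ hb.ne', add_comm (b * y)]
        ring
    _ = -exp b⁻¹ * Ei (-b⁻¹) := by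
        rw [integral_const_mul, hscale, mul_inv_cancel_left₀ hb.ne',
          integral_exp_neg_mul_div_add_one (inv_pos.mpr hb)]

theorem integral_integral_exp_neg_mul_log_one_add_mul {A : ℝ} (hA : 0 < A) :
    ∫ x in Ioi (0:ℝ), exp (-x) * ∫ y in Ioi (0:ℝ), exp (-y) * log (1 + 1 / A * (x * y)) =
      -∫ x in Ioi (0:ℝ), x ^ (-(2:ℝ)) * exp (A * x - 1 / x) * Ei (-(A * x)) := by
  calc ∫ x in Ioi (0:ℝ), exp (-x) * ∫ y in Ioi (0:ℝ), exp (-y) * log (1 + 1 / A * (x * y))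
      = ∫ x in Ioi (0:ℝ), exp (-x) * (-exp (A / x) * Ei (-(A / x))) := by
        refine setIntegral_congr_fun measurableSet_Ioi fun x (hx : 0 < x) => ?_
        have hb := integral_exp_neg_mul_log_one_add_mul (div_pos hx hA)
        simp only [inv_div, div_mul_eq_mul_div] at hb
        simp only [one_div_mul_eq_div, hb]
    _ = ∫ x in Ioi (0:ℝ), x ^ (-2:ℝ) • (exp (-x⁻¹) * (-exp (A / x⁻¹) * Ei (-(A / x⁻¹)))) :=
        (integral_comp_inv_Ioi _).symm
    _ = -∫ x in Ioi (0:ℝ), x ^ (-(2:ℝ)) * exp (A * x - 1 / x) * Ei (-(A * x)) := by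
        rw [← integral_neg]
        refine setIntegral_congr_fun measurableSet_Ioi fun x _ => ?_
        rw [smul_eq_mul, div_inv_eq_mul, sub_eq_add_neg, exp_add, one_div]
        ring

noncomputable def expDensityMeasure : Measure ℝ :=
  volume.withDensity fun x => ENNReal.ofReal (expDensity x)

theorem expDensityMeasure_eq :
    expDensityMeasure =
      (volume.restrict (Ioi 0)).withDensity fun x => ENNReal.ofReal (exp (-x)) := by
  rw [← withDensity_indicator measurableSet_Ioi, expDensityMeasure]
  congr 1
  ext x
  by_cases hx : 0 < x <;> simp [expDensity, hx]

instance isProbabilityMeasure_expDensityMeasure :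
    IsProbabilityMeasure expDensityMeasure where
  measure_univ := by
    rw [expDensityMeasure_eq, withDensity_apply _ MeasurableSet.univ, Measure.restrict_univ,
      ← ofReal_integral_eq_lintegral_ofReal (integrableOn_exp_neg_Ioi 0)
        (ae_of_all _ fun _ => (exp_pos _).le), integral_exp_neg_Ioi_zero, ENNReal.ofReal_one]

theorem integral_expDensityMeasure (g : ℝ → ℝ) :
    ∫ x, g x ∂expDensityMeasure = ∫ x in Ioi 0, exp (-x) * g x := by
  rw [expDensityMeasure_eq, integral_withDensity_eq_integral_toReal_smul (by fun_prop)
    (ae_of_all _ fun _ => ENNReal.ofReal_lt_top)]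
  simp only [ENNReal.toReal_ofReal (exp_pos _).le, smul_eq_mul]

theorem ae_pos_expDensityMeasure : ∀ᵐ x ∂expDensityMeasure, 0 < x := by
  rw [expDensityMeasure_eq]
  exact (withDensity_absolutelyContinuous _ _).ae_le (ae_restrict_mem measurableSet_Ioi)

theorem integrable_id_expDensityMeasure : Integrable (fun x => x) expDensityMeasure := by
  rw [expDensityMeasure_eq, integrable_withDensity_iff (by fun_prop)
    (ae_of_all _ fun _ => ENNReal.ofReal_lt_top)]
  simp only [ENNReal.toReal_ofReal (exp_pos _).le]
  exact integrableOn_mul_exp_neg_Ioi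

theorem integrable_log_one_add_mul_mul {μ ν : Measure ℝ} [SFinite μ] [SFinite ν]
    (hμ : ∀ᵐ x ∂μ, 0 ≤ x) (hν : ∀ᵐ y ∂ν, 0 ≤ y)
    (hμi : Integrable (fun x => x) μ) (hνi : Integrable (fun y => y) ν) {a : ℝ} (ha : 0 ≤ a) :
    Integrable (fun p : ℝ × ℝ => log (1 + a * (p.1 * p.2))) (μ.prod ν) := by
  refine ((hμi.mul_prod hνi).const_mul a).mono'
    (Measurable.aestronglyMeasurable (by fun_prop)) ?_
  filter_upwards [Measure.quasiMeasurePreserving_fst.ae hμ,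
    Measure.quasiMeasurePreserving_snd.ae hν] with p hx hy
  have ht : 0 ≤ a * (p.1 * p.2) := by positivity
  rw [norm_of_nonneg (log_nonneg (by linarith))]
  linarith [log_le_sub_one_of_pos (show 0 < 1 + a * (p.1 * p.2) by linarith)]

theorem ProbabilityTheory.IndepFun.integral_comp_prodMk {Ω α β E : Type*} [MeasurableSpace Ω]
    [MeasurableSpace α] [MeasurableSpace β] [NormedAddCommGroup E] [NormedSpace ℝ E] {P : Measure Ω}
    [IsFiniteMeasure P] {X : Ω → α} {Y : Ω → β} {μ : Measure α} {ν : Measure β}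
    (hXY : IndepFun X Y P) (hX : AEMeasurable X P) (hY : AEMeasurable Y P)
    (hμ : P.map X = μ) (hν : P.map Y = ν) {g : α × β → E} (hg : Integrable g (μ.prod ν)) :
    ∫ ω, g (X ω, Y ω) ∂P = ∫ x, ∫ y, g (x, y) ∂ν ∂μ := by
  subst hμ hν
  have hprod := hXY.map_prod_eq_prod_map_map hX hY
  rw [← integral_prod g hg, ← hprod,
    integral_map (hX.prodMk hY) (by rw [hprod]; exact hg.aestronglyMeasurable)]

theorem stmt_11 {Ω : Type*} [MeasureSpace Ω] [IsProbabilityMeasure (ℙ : Measure Ω)]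
    (X Y : Ω → ℝ) (hX : Measurable X) (hY : Measurable Y)
    (hXlaw : Measure.map X ℙ = volume.withDensity (fun x => ENNReal.ofReal (expDensity x)))
    (hYlaw : Measure.map Y ℙ = volume.withDensity (fun x => ENNReal.ofReal (expDensity x)))
    (hindep : IndepFun X Y ℙ) (A : ℝ) (hA : 0 < A) :
    (∫ ω, Real.log (1 + (1 / A) * (X ω * Y ω)) ∂ℙ =
      -∫ x in Ioi (0:ℝ),
          x ^ (-(2:ℝ)) * Real.exp (A * x - 1 / x) * Ei (-(A * x))) ∧
    ∀ c : ℝ, 0 < c →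
      ∫ z in Ioi (0:ℝ), Real.exp (-(c * z)) / (z + 1) = -Real.exp c * Ei (-c) := by
  refine ⟨?_, fun c hc => integral_exp_neg_mul_div_add_one hc⟩
  have hpos : ∀ᵐ x ∂expDensityMeasure, 0 ≤ x := ae_pos_expDensityMeasure.mono fun _ => le_of_lt
  calc ∫ ω, log (1 + (1 / A) * (X ω * Y ω)) ∂ℙ
      = ∫ x, ∫ y, log (1 + 1 / A * (x * y)) ∂expDensityMeasure ∂expDensityMeasure :=
        hindep.integral_comp_prodMk (g := fun p => log (1 + 1 / A * (p.1 * p.2)))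
          hX.aemeasurable hY.aemeasurable hXlaw hYlaw
          (integrable_log_one_add_mul_mul hpos hpos integrable_id_expDensityMeasure
            integrable_id_expDensityMeasure (by positivity))
    _ = ∫ x in Ioi (0:ℝ), exp (-x) *
          ∫ y in Ioi (0:ℝ), exp (-y) * log (1 + 1 / A * (x * y)) := by
        simp only [integral_expDensityMeasure]
    _ = _ := integral_integral_exp_neg_mul_log_one_add_mul hA
end

section
/- Let h_c and h_r be independent, each Gamma(m, m)-distributed with m a positive integer. Fix positive constants P_c, P_r, a₁, a₂, a₃ and γ_th ≥ 0. Then P( P_c·h_c / (P_r·a₃·h_r + a₁ + a₂) < γ_th ) = 1 − exp(−m γ_th(a₁+a₂)/P_c) Σ_{p=0}^{m−1} (m^p γ_th^p/p!) Σ_{r=0}^{p} C(p,r) (a₁+a₂)^r (P_r a₃)^{p−r} P_c^{−p} · Γ(m+p−r)/(Γ(m) m^{p−r}) · (γ_th a₃ P_r/P_c + 1)^{−(m+p−r)}. -/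
open MeasureTheory ProbabilityTheory Set

/-- Nakagami-m power-gain density (Gamma with shape m, rate m), m a positive integer. -/
noncomputable def nakDensity (m : ℕ) (x : ℝ) : ℝ :=
  if 0 < x then (m : ℝ) ^ m / Real.Gamma m * x ^ (m - 1) * Real.exp (-(m * x)) else 0

section NakAux

open Real Filter Finset

/-- The smooth part of the density. -/
noncomputable def nakG (m : ℕ) (x : ℝ) : ℝ :=
  (m : ℝ) ^ m / Real.Gamma m * x ^ (m - 1) * Real.exp (-(m * x))

lemma nakG_cont (m : ℕ) : Continuous (nakG m) := by
  unfold nakG; continuity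

lemma nakG_nonneg (m : ℕ) {x : ℝ} (hx : 0 ≤ x) : 0 ≤ nakG m x := by
  unfold nakG
  have h1 : 0 ≤ (m:ℝ)^m / Real.Gamma m := by positivity
  positivity

lemma nakDensity_nonneg (m : ℕ) (x : ℝ) : 0 ≤ nakDensity m x := by
  unfold nakDensity
  split
  · have h1 : 0 ≤ (m:ℝ)^m / Real.Gamma m := by positivity
    have h2 : (0:ℝ) ≤ x := by linarith
    positivity
  · exact le_refl 0

lemma nakDensity_measurable (m : ℕ) : Measurable (nakDensity m) := by
  unfold nakDensity
  exact Measurable.ite measurableSet_Ioi (by fun_prop) measurable_const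

lemma nakDensity_eq_indicator (m : ℕ) (x : ℝ) :
    ENNReal.ofReal (nakDensity m x)
      = (Ioi (0:ℝ)).indicator (fun x => ENNReal.ofReal (nakG m x)) x := by
  by_cases h : 0 < x
  · rw [indicator_of_mem (Set.mem_Ioi.mpr h)]; simp [nakDensity, nakG, if_pos h]
  · rw [indicator_of_notMem (by simpa using h)]; simp [nakDensity, if_neg h]

lemma nak_ae_gamma (m : ℕ) (hm : 0 < m) :
    (fun x => ENNReal.ofReal (nakDensity m x)) =ᵐ[volume] gammaPDF m m := by
  have h0 : ∀ᵐ x : ℝ, x ≠ 0 := by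
    rw [ae_iff]; simp only [not_ne_iff]; simpa using measure_singleton (0 : ℝ)
  filter_upwards [h0] with x hx
  rcases lt_or_gt_of_ne hx with h | h
  · rw [gammaPDF_of_neg h]
    simp [nakDensity, not_lt.mpr h.le]
  · rw [gammaPDF_of_nonneg h.le, nakDensity, if_pos h]
    congr 1
    rw [← Real.rpow_natCast (m : ℝ) m, ← Real.rpow_natCast x (m - 1)]
    congr 2
    push_cast [Nat.cast_sub hm]
    ring

lemma nakMeasure_eq (m : ℕ) (hm : 0 < m) :
    volume.withDensity (fun x => ENNReal.ofReal (nakDensity m x)) = gammaMeasure m m :=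
  withDensity_congr_ae (nak_ae_gamma m hm)

lemma nak_prob (m : ℕ) (hm : 0 < m) :
    IsProbabilityMeasure (volume.withDensity (fun x => ENNReal.ofReal (nakDensity m x))) := by
  rw [nakMeasure_eq m hm]
  exact isProbabilityMeasure_gammaMeasure (by exact_mod_cast hm) (by exact_mod_cast hm)

lemma erlang_hasDerivAt (k : ℕ) (lam t : ℝ) :
    HasDerivAt (fun s => -(Real.exp (-(lam*s)) * ∑ p ∈ Finset.range (k+1), (lam*s)^p / p.factorial))
      (lam^(k+1) * t^k / k.factorial * Real.exp (-(lam*t))) t := by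
  have h1 : HasDerivAt (fun s : ℝ => lam * s) lam t := by
    simpa using (hasDerivAt_id t).const_mul lam
  have he : HasDerivAt (fun s : ℝ => Real.exp (-(lam*s))) (Real.exp (-(lam*t)) * (-lam)) t :=
    h1.neg.exp
  have hS : HasDerivAt (fun s : ℝ => ∑ p ∈ Finset.range (k+1), (lam*s)^p / p.factorial)
      (∑ p ∈ Finset.range (k+1), (p : ℝ) * (lam*t)^(p-1) * lam / p.factorial) t :=
    HasDerivAt.fun_sum (fun p _ => ((h1.pow p).div_const _))
  have := (he.fun_mul hS).fun_neg
  refine this.congr_deriv ?_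
  have hsum : ∑ p ∈ Finset.range (k+1), (p : ℝ) * (lam*t)^(p-1) * lam / p.factorial
      = lam * ∑ p ∈ Finset.range k, (lam*t)^p / p.factorial := by
    rw [Finset.sum_range_succ', Finset.mul_sum]
    simp only [Nat.cast_zero, zero_mul, Nat.factorial_zero, Nat.cast_one, zero_div, add_zero]
    refine Finset.sum_congr rfl fun p _ => ?_
    have hp : ((p+1).factorial : ℝ) = (p+1) * p.factorial := by
      rw [Nat.factorial_succ]; push_cast; ring
    have hfp : (p.factorial : ℝ) ≠ 0 := Nat.cast_ne_zero.mpr p.factorial_ne_zero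
    simp only [Nat.add_sub_cancel, hp]
    push_cast
    field_simp
  rw [hsum]
  rw [Finset.sum_range_succ]
  have hfk : (k.factorial : ℝ) ≠ 0 := Nat.cast_ne_zero.mpr k.factorial_ne_zero
  field_simp
  ring

lemma erlang_cdf (k : ℕ) (lam t : ℝ) :
    ∫ x in (0:ℝ)..t, lam^(k+1) * x^k / k.factorial * Real.exp (-(lam*x))
      = 1 - Real.exp (-(lam*t)) * ∑ p ∈ Finset.range (k+1), (lam*t)^p / p.factorial := by
  rw [intervalIntegral.integral_eq_sub_of_hasDerivAt
    (fun x _ => erlang_hasDerivAt k lam x)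
    (Continuous.intervalIntegrable (by continuity) _ _)]
  have h0 : ∑ p ∈ Finset.range (k+1), (lam*(0:ℝ))^p / p.factorial = 1 := by
    rw [Finset.sum_range_succ']
    simp
  rw [h0]
  simp
  ring

lemma gamma_cast_factorial (m : ℕ) (hm : 0 < m) :
    Real.Gamma m = (m-1).factorial := by
  obtain ⟨k, rfl⟩ : ∃ k, m = k + 1 := ⟨m - 1, (Nat.succ_pred_eq_of_pos hm).symm⟩
  rw [show ((k+1:ℕ):ℝ) = (k:ℝ) + 1 by push_cast; ring]
  rw [Real.Gamma_nat_eq_factorial]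
  simp

lemma nak_int_cdf (m : ℕ) (hm : 0 < m) {t : ℝ} (ht : 0 ≤ t) :
    ∫ x in (0:ℝ)..t, nakG m x
      = 1 - Real.exp (-(m*t)) * ∑ p ∈ Finset.range m, ((m:ℝ)*t)^p / p.factorial := by
  obtain ⟨k, rfl⟩ : ∃ k, m = k + 1 := ⟨m - 1, (Nat.succ_pred_eq_of_pos hm).symm⟩
  have := erlang_cdf k ((k:ℝ)+1) t
  push_cast
  rw [← this]
  refine intervalIntegral.integral_congr fun x _ => ?_
  unfold nakG
  rw [gamma_cast_factorial (k+1) (Nat.succ_pos k)]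
  push_cast
  ring

lemma nak_Iio (m : ℕ) (hm : 0 < m) {t : ℝ} (ht : 0 ≤ t) :
    volume.withDensity (fun x => ENNReal.ofReal (nakDensity m x)) (Iio t)
      = ENNReal.ofReal (1 - Real.exp (-(m*t)) * ∑ p ∈ Finset.range m, ((m:ℝ)*t)^p / p.factorial) := by
  rw [withDensity_apply _ measurableSet_Iio]
  simp_rw [nakDensity_eq_indicator]
  rw [lintegral_indicator measurableSet_Ioi]
  rw [Measure.restrict_restrict measurableSet_Ioi]
  have hIoo : Ioi (0:ℝ) ∩ Iio t = Ioo 0 t := rfl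
  rw [hIoo]
  have hint : IntegrableOn (nakG m) (Ioo 0 t) volume :=
    ((nakG_cont m).integrableOn_Icc).mono_set Ioo_subset_Icc_self
  rw [← ofReal_integral_eq_lintegral_ofReal hint]
  · rw [← integral_Ioc_eq_integral_Ioo, ← intervalIntegral.integral_of_le ht,
      nak_int_cdf m hm ht]
  · filter_upwards [ae_restrict_mem measurableSet_Ioo] with x hx
    exact nakG_nonneg m hx.1.le

lemma nak_Ici (m : ℕ) (hm : 0 < m) {t : ℝ} (ht : 0 ≤ t) :
    volume.withDensity (fun x => ENNReal.ofReal (nakDensity m x)) {x | t ≤ x}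
      = ENNReal.ofReal (Real.exp (-(m*t)) * ∑ p ∈ Finset.range m, ((m:ℝ)*t)^p / p.factorial) := by
  haveI := nak_prob m hm
  set μ := volume.withDensity (fun x => ENNReal.ofReal (nakDensity m x)) with hμ
  set E : ℝ := Real.exp (-(m*t)) * ∑ p ∈ Finset.range m, ((m:ℝ)*t)^p / p.factorial with hE
  have hset : {x : ℝ | t ≤ x} = (Iio t)ᶜ := by
    ext x; simp [not_lt]
  have hE1 : 0 ≤ 1 - E := by
    rw [hE, ← nak_int_cdf m hm ht]
    exact intervalIntegral.integral_nonneg ht (fun x hx => nakG_nonneg m hx.1)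
  rw [hset, measure_compl measurableSet_Iio (measure_ne_top _ _), measure_univ,
    nak_Iio m hm ht, ← hE]
  rw [← ENNReal.ofReal_one, ← ENNReal.ofReal_sub _ hE1]
  norm_num

lemma nak_ae_pos (m : ℕ) :
    ∀ᵐ y ∂(volume.withDensity (fun x => ENNReal.ofReal (nakDensity m x))), 0 < y := by
  rw [ae_iff]
  have hset : {y : ℝ | ¬ 0 < y} = Set.Iic 0 := by ext y; simp
  rw [hset, withDensity_apply _ measurableSet_Iic]
  rw [setLIntegral_congr_fun (g := fun _ => 0) measurableSet_Iic
    (fun y (hy : y ≤ 0) => by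
      simp [nakDensity, not_lt.mpr hy])]
  simp

lemma nak_moment_integrable (m k : ℕ) (hm : 0 < m) {c : ℝ} (hc : 0 ≤ c) :
    IntegrableOn (fun y => nakG m y * (y^k * Real.exp (-(c*y)))) (Ioi (0:ℝ)) := by
  have hb : (0:ℝ) < (m:ℝ) + c := by positivity
  have base : IntegrableOn (fun x : ℝ => x ^ (((m+k-1:ℕ)):ℝ) * Real.exp (-((m:ℝ)+c) * x ^ (1:ℝ)))
      (Ioi (0:ℝ)) := integrableOn_rpow_mul_exp_neg_mul_rpow
        (lt_of_lt_of_le (by norm_num) (Nat.cast_nonneg _)) zero_lt_one hb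
  have : IntegrableOn (fun x : ℝ => ((m:ℝ)^m / Real.Gamma m) *
      (x ^ (((m+k-1:ℕ)):ℝ) * Real.exp (-((m:ℝ)+c) * x ^ (1:ℝ)))) (Ioi (0:ℝ)) :=
    base.const_mul _
  refine this.congr_fun ?_ measurableSet_Ioi
  intro x hx
  have hx0 : (0:ℝ) < x := hx
  simp only [Real.rpow_natCast, Real.rpow_one]
  unfold nakG
  rw [show m + k - 1 = m - 1 + k by omega, pow_add,
    show -((↑m:ℝ)+c)*x = -(↑m*x) + -(c*x) by ring, Real.exp_add]
  ring

lemma nak_moment (m k : ℕ) (hm : 0 < m) {c : ℝ} (hc : 0 ≤ c) :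
    ∫ y in Ioi (0:ℝ), nakG m y * (y^k * Real.exp (-(c*y)))
      = (m:ℝ)^m / Real.Gamma m *
          ((1/((m:ℝ)+c)) ^ (((m+k:ℕ)):ℝ) * Real.Gamma ((m+k:ℕ))) := by
  have hb : (0:ℝ) < (m:ℝ) + c := by positivity
  have key := integral_rpow_mul_exp_neg_mul_Ioi
    (show (0:ℝ) < ((m+k:ℕ):ℝ) by positivity) hb
  rw [← key, ← integral_const_mul]
  refine setIntegral_congr_fun measurableSet_Ioi fun x hx => ?_
  have hx0 : (0:ℝ) < x := hx
  have hcast : ((m+k:ℕ):ℝ) - 1 = ((m+k-1:ℕ):ℝ) := by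
    have : 1 ≤ m + k := by omega
    push_cast [Nat.cast_sub this]; ring
  rw [hcast, Real.rpow_natCast]
  unfold nakG
  rw [show m + k - 1 = m - 1 + k by omega, pow_add,
    show -(((↑m:ℝ)+c)*x) = -(↑m*x) + -(c*x) by ring, Real.exp_add]
  ring

lemma rpow_helper (m j n : ℕ) (hm : 0 < m) (hn : n = m + j) {u : ℝ} (hu : 0 < u) :
    (1/((m:ℝ)*u)) ^ ((n:ℕ):ℝ) = u ^ (-((n:ℕ):ℝ)) / ((m:ℝ)^m * (m:ℝ)^j) := by
  have hm' : (0:ℝ) < m := by exact_mod_cast hm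
  rw [one_div, Real.inv_rpow (by positivity), Real.mul_rpow hm'.le hu.le,
    Real.rpow_natCast (m:ℝ) n, Real.rpow_neg hu.le, hn, pow_add]
  have h1 : ((m:ℝ))^m ≠ 0 := by positivity
  have h2 : ((m:ℝ))^j ≠ 0 := by positivity
  have h3 : u ^ (((m+j:ℕ)):ℝ) ≠ 0 := by positivity
  field_simp

/-- Pointwise decomposition of the integrand into a double sum. -/
lemma nak_pt (m : ℕ) (A B Pc γ : ℝ) (y : ℝ) :
    nakG m y *
        (Real.exp (-((m:ℝ)*(γ*(B*y+A)/Pc))) *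
          ∑ p ∈ Finset.range m, ((m:ℝ)*(γ*(B*y+A)/Pc))^p / p.factorial)
      = ∑ p ∈ Finset.range m, ∑ r ∈ Finset.range (p+1),
          (Real.exp (-((m:ℝ)*γ*A/Pc)) * ((Nat.choose p r : ℝ) * A^r * B^(p-r) *
            ((m:ℝ)*γ/Pc)^p / p.factorial)) *
          (nakG m y * (y^(p-r) * Real.exp (-(((m:ℝ)*γ*B/Pc)*y)))) := by
  have hexp : Real.exp (-((m:ℝ)*(γ*(B*y+A)/Pc)))
      = Real.exp (-((m:ℝ)*γ*A/Pc)) * Real.exp (-(((m:ℝ)*γ*B/Pc)*y)) := by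
    rw [← Real.exp_add]
    congr 1
    ring
  have hbin : ∀ p : ℕ, ((m:ℝ)*(γ*(B*y+A)/Pc))^p
      = ∑ r ∈ Finset.range (p+1),
          (Nat.choose p r : ℝ) * A^r * B^(p-r) * ((m:ℝ)*γ/Pc)^p * y^(p-r) := by
    intro p
    have : (m:ℝ)*(γ*(B*y+A)/Pc) = ((m:ℝ)*γ/Pc) * (A + B*y) := by ring
    rw [this, mul_pow, add_pow, Finset.mul_sum]
    refine Finset.sum_congr rfl fun r _ => ?_
    rw [mul_pow]
    ring
  rw [hexp, Finset.mul_sum, Finset.mul_sum]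
  refine Finset.sum_congr rfl fun p _ => ?_
  rw [hbin p, Finset.sum_div, Finset.mul_sum, Finset.mul_sum]
  refine Finset.sum_congr rfl fun r _ => ?_
  ring

lemma J_integrable (m : ℕ) (hm : 0 < m) (A B Pc γ : ℝ) (hB : 0 ≤ B)
    (hPc : 0 < Pc) (hγ : 0 ≤ γ) :
    IntegrableOn (fun y => nakG m y *
        (Real.exp (-((m:ℝ)*(γ*(B*y+A)/Pc))) *
          ∑ p ∈ Finset.range m, ((m:ℝ)*(γ*(B*y+A)/Pc))^p / p.factorial)) (Ioi (0:ℝ)) := by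
  have hc : (0:ℝ) ≤ (m:ℝ)*γ*B/Pc := by positivity
  have : IntegrableOn (fun y => ∑ p ∈ Finset.range m, ∑ r ∈ Finset.range (p+1),
      (Real.exp (-((m:ℝ)*γ*A/Pc)) * ((Nat.choose p r : ℝ) * A^r * B^(p-r) *
        ((m:ℝ)*γ/Pc)^p / p.factorial)) *
      (nakG m y * (y^(p-r) * Real.exp (-(((m:ℝ)*γ*B/Pc)*y))))) (Ioi (0:ℝ)) :=
    integrable_finset_sum _ (fun p _ => integrable_finset_sum _ (fun r _ =>
      ((nak_moment_integrable m (p-r) hm hc).const_mul _)))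
  exact this.congr (ae_of_all _ (fun y => (nak_pt m A B Pc γ y).symm))

lemma J_eval (m : ℕ) (hm : 0 < m) (A B Pc γ : ℝ) (hA : 0 < A) (hB : 0 < B)
    (hPc : 0 < Pc) (hγ : 0 ≤ γ) :
    ∫ y in Ioi (0:ℝ), nakG m y *
        (Real.exp (-((m:ℝ)*(γ*(B*y+A)/Pc))) *
          ∑ p ∈ Finset.range m, ((m:ℝ)*(γ*(B*y+A)/Pc))^p / p.factorial)
      = Real.exp (-((m:ℝ) * γ * A / Pc)) *
        ∑ p ∈ Finset.range m, ((m : ℝ) ^ p * γ ^ p / p.factorial) *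
          ∑ r ∈ Finset.range (p + 1),
            (Nat.choose p r : ℝ) * A ^ r * B ^ (p - r) / Pc ^ p *
              (Real.Gamma ((m + (p - r) : ℕ) : ℝ) / (Real.Gamma m * (m : ℝ) ^ (p - r))) *
              (γ * B / Pc + 1) ^ (-(((m + (p - r) : ℕ) : ℝ))) := by
  have hc : (0:ℝ) ≤ (m:ℝ)*γ*B/Pc := by positivity
  simp_rw [nak_pt m A B Pc γ]
  rw [integral_finset_sum _ (fun p _ => integrable_finset_sum _ (fun r _ =>
    ((nak_moment_integrable m (p-r) hm hc).const_mul _)))]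
  rw [Finset.mul_sum]
  refine Finset.sum_congr rfl fun p _ => ?_
  rw [integral_finset_sum _ (fun r _ => ((nak_moment_integrable m (p-r) hm hc).const_mul _))]
  rw [Finset.mul_sum, Finset.mul_sum]
  refine Finset.sum_congr rfl fun r hr => ?_
  rw [integral_const_mul, nak_moment m (p-r) hm hc]
  have hu : (0:ℝ) < γ*B/Pc + 1 := by positivity
  have hmu : (m:ℝ) + (m:ℝ)*γ*B/Pc = (m:ℝ) * (γ*B/Pc + 1) := by
    field_simp
    ring
  rw [hmu, rpow_helper m (p-r) (m+(p-r)) hm rfl hu]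
  have hX : (γ*B/Pc+1) ^ (-((((m+(p-r):ℕ)):ℝ))) ≠ 0 := by
    positivity
  have hΓm : Real.Gamma m ≠ 0 :=
    ne_of_gt (Real.Gamma_pos_of_pos (by exact_mod_cast hm))
  have h1 : ((m:ℝ))^(p-r) ≠ 0 := by positivity
  have hPc' : Pc ≠ 0 := ne_of_gt hPc
  have hfac : ((p.factorial : ℝ)) ≠ 0 := Nat.cast_ne_zero.mpr p.factorial_ne_zero
  field_simp
  rw [mul_assoc, ← mul_pow, div_mul_cancel₀ _ hPc', mul_pow]
  ring

end NakAux

/-- Theorem 3: near-user outage probability in NOMA-based Semi-ISaC Scenario-I. -/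
theorem stmt_15 {Ω : Type*} [MeasureSpace Ω] [IsProbabilityMeasure (ℙ : Measure Ω)]
    (m : ℕ) (hm : 0 < m) (hc hr : Ω → ℝ) (hcm : Measurable hc) (hrm : Measurable hr)
    (hclaw : Measure.map hc ℙ = volume.withDensity (fun x => ENNReal.ofReal (nakDensity m x)))
    (hrlaw : Measure.map hr ℙ = volume.withDensity (fun x => ENNReal.ofReal (nakDensity m x)))
    (hindep : IndepFun hc hr ℙ)
    (Pc Pr a1 a2 a3 γth : ℝ)
    (hPc : 0 < Pc) (hPr : 0 < Pr) (ha1 : 0 < a1) (ha2 : 0 < a2) (ha3 : 0 < a3)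
    (hγ : 0 ≤ γth) :
    (ℙ {ω | Pc * hc ω / (Pr * a3 * hr ω + a1 + a2) < γth}).toReal =
      1 - Real.exp (-(m * γth * (a1 + a2) / Pc)) *
        ∑ p ∈ Finset.range m, ((m : ℝ) ^ p * γth ^ p / Nat.factorial p) *
          ∑ r ∈ Finset.range (p + 1),
            (Nat.choose p r : ℝ) * (a1 + a2) ^ r * (Pr * a3) ^ (p - r) / Pc ^ p *
              (Real.Gamma ((m + (p - r) : ℕ) : ℝ) / (Real.Gamma m * (m : ℝ) ^ (p - r))) *
              (γth * a3 * Pr / Pc + 1) ^ (-(((m + (p - r) : ℕ) : ℝ))) := by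
  classical
  set μ := volume.withDensity (fun x => ENNReal.ofReal (nakDensity m x)) with hμdef
  haveI hprob : IsProbabilityMeasure μ := nak_prob m hm
  set A : ℝ := a1 + a2 with hAdef
  set B : ℝ := Pr * a3 with hBdef
  have hA : 0 < A := by positivity
  have hB : 0 < B := by positivity
  -- the target set
  set S : Set (ℝ × ℝ) := {q : ℝ × ℝ | Pc * q.1 / (B * q.2 + A) < γth} with hSdef
  have hSm : MeasurableSet S := by
    apply measurableSet_lt
    · exact (measurable_fst.const_mul Pc).div
        ((measurable_snd.const_mul B).add_const A)
    · exact measurable_const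
  -- joint law
  have hpair : Measure.map (fun ω => (hc ω, hr ω)) ℙ = μ.prod μ := by
    have h := (ProbabilityTheory.indepFun_iff_map_prod_eq_prod_map_map
      hcm.aemeasurable hrm.aemeasurable).mp hindep
    rw [hclaw, hrlaw] at h
    exact h
  have hev : {ω | Pc * hc ω / (Pr * a3 * hr ω + a1 + a2) < γth}
      = (fun ω => (hc ω, hr ω)) ⁻¹' S := by
    ext ω
    simp only [hSdef, Set.mem_setOf_eq, Set.mem_preimage, hBdef, hAdef]
    rw [show Pr * a3 * hr ω + a1 + a2 = Pr * a3 * hr ω + (a1 + a2) by ring]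
  have hPS : ℙ {ω | Pc * hc ω / (Pr * a3 * hr ω + a1 + a2) < γth} = (μ.prod μ) S := by
    rw [hev, ← Measure.map_apply (hcm.prodMk hrm) hSm, hpair]
  -- complement computation
  -- J : the value of the complement probability
  set J : ℝ := Real.exp (-((m:ℝ) * γth * A / Pc)) *
      ∑ p ∈ Finset.range m, ((m : ℝ) ^ p * γth ^ p / p.factorial) *
        ∑ r ∈ Finset.range (p + 1),
          (Nat.choose p r : ℝ) * A ^ r * B ^ (p - r) / Pc ^ p *
            (Real.Gamma ((m + (p - r) : ℕ) : ℝ) / (Real.Gamma m * (m : ℝ) ^ (p - r))) *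
            (γth * B / Pc + 1) ^ (-(((m + (p - r) : ℕ) : ℝ))) with hJdef
  have hcompl : (μ.prod μ) Sᶜ = ENNReal.ofReal J := by
    rw [Measure.prod_apply_symm hSm.compl]
    -- identify sections a.e.
    have hsec : ∀ᵐ y ∂μ, μ ((fun x => (x, y)) ⁻¹' Sᶜ)
        = ENNReal.ofReal (Real.exp (-((m:ℝ)*(γth*(B*y+A)/Pc))) *
            ∑ p ∈ Finset.range m, ((m:ℝ)*(γth*(B*y+A)/Pc))^p / p.factorial) := by
      filter_upwards [nak_ae_pos m] with y hy
      have hD : 0 < B * y + A := by positivity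
      have hsec_eq : (fun x => (x, y)) ⁻¹' Sᶜ = {x : ℝ | γth*(B*y+A)/Pc ≤ x} := by
        ext x
        simp only [Set.mem_preimage, Set.mem_compl_iff, hSdef, Set.mem_setOf_eq, not_lt]
        rw [le_div_iff₀ hD, div_le_iff₀ hPc]
        constructor <;> intro h <;> nlinarith
      rw [hsec_eq]
      have ht : 0 ≤ γth*(B*y+A)/Pc := by positivity
      rw [nak_Ici m hm ht]
    rw [lintegral_congr_ae hsec]
    -- unfold the density
    have hmeas : Measurable (fun y : ℝ => ENNReal.ofReal
        (Real.exp (-((m:ℝ)*(γth*(B*y+A)/Pc))) *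
          ∑ p ∈ Finset.range m, ((m:ℝ)*(γth*(B*y+A)/Pc))^p / p.factorial)) := by
      fun_prop
    rw [hμdef, lintegral_withDensity_eq_lintegral_mul _
      ((nakDensity_measurable m).ennreal_ofReal) hmeas]
    have hstep : ∀ y : ℝ, (ENNReal.ofReal (nakDensity m y) * ENNReal.ofReal
        (Real.exp (-((m:ℝ)*(γth*(B*y+A)/Pc))) *
          ∑ p ∈ Finset.range m, ((m:ℝ)*(γth*(B*y+A)/Pc))^p / p.factorial))
        = (Ioi (0:ℝ)).indicator (fun y => ENNReal.ofReal (nakG m y *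
            (Real.exp (-((m:ℝ)*(γth*(B*y+A)/Pc))) *
              ∑ p ∈ Finset.range m, ((m:ℝ)*(γth*(B*y+A)/Pc))^p / p.factorial))) y := by
      intro y
      by_cases h : 0 < y
      · rw [Set.indicator_of_mem (Set.mem_Ioi.mpr h),
          ← ENNReal.ofReal_mul (nakDensity_nonneg m y)]
        congr 1
        simp [nakDensity, nakG, if_pos h]
      · rw [Set.indicator_of_notMem (by simpa using h)]
        simp [nakDensity, if_neg h]
    simp only [Pi.mul_apply]
    simp_rw [hstep]
    rw [lintegral_indicator measurableSet_Ioi]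
    have hnn : 0 ≤ᵐ[volume.restrict (Ioi (0:ℝ))] (fun y => nakG m y *
        (Real.exp (-((m:ℝ)*(γth*(B*y+A)/Pc))) *
          ∑ p ∈ Finset.range m, ((m:ℝ)*(γth*(B*y+A)/Pc))^p / p.factorial)) := by
      filter_upwards [ae_restrict_mem measurableSet_Ioi] with y hy
      have hy0 : (0:ℝ) < y := hy
      have ht : 0 ≤ (m:ℝ)*(γth*(B*y+A)/Pc) := by positivity
      have h1 : 0 ≤ Real.exp (-((m:ℝ)*(γth*(B*y+A)/Pc))) *
          ∑ p ∈ Finset.range m, ((m:ℝ)*(γth*(B*y+A)/Pc))^p / p.factorial := by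
        apply mul_nonneg (Real.exp_nonneg _)
        exact Finset.sum_nonneg fun p _ => by positivity
      exact mul_nonneg (nakG_nonneg m hy0.le) h1
    rw [← ofReal_integral_eq_lintegral_ofReal
      (J_integrable m hm A B Pc γth hB.le hPc hγ) hnn]
    rw [J_eval m hm A B Pc γth hA hB hPc hγ]
  -- assemble
  have hJ0 : 0 ≤ J := by
    rw [hJdef]
    apply mul_nonneg (Real.exp_nonneg _)
    apply Finset.sum_nonneg; intro p _
    apply mul_nonneg (by positivity)
    apply Finset.sum_nonneg; intro r _
    have hg1 : 0 ≤ Real.Gamma ((m + (p-r):ℕ):ℝ) :=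
      Real.Gamma_nonneg_of_nonneg (by positivity)
    have hg2 : 0 ≤ Real.Gamma (m:ℝ) := Real.Gamma_nonneg_of_nonneg (by positivity)
    positivity
  have htot : (μ.prod μ) S + (μ.prod μ) Sᶜ = 1 := by
    rw [measure_add_measure_compl hSm, measure_univ]
  have htoReal : ((μ.prod μ) S).toReal + ((μ.prod μ) Sᶜ).toReal = 1 := by
    rw [← ENNReal.toReal_add (measure_ne_top _ _) (measure_ne_top _ _), htot]
    simp
  have hfin : ((μ.prod μ) S).toReal = 1 - J := by
    rw [hcompl, ENNReal.toReal_ofReal hJ0] at htoReal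
    linarith
  rw [hPS, hfin, hJdef, hAdef, hBdef,
    show γth*(Pr*a3)/Pc = γth*a3*Pr/Pc by ring]
end
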